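/- Let A be a Keigher differential ring, X = Spec^Δ A, and D a differential subring of the global sections O(X) containing the image of the canonical map ι : A → O(X). Then the contraction map ι* : Spec^Δ D → Spec^Δ A is a homeomorphism. -/

import Mathlib

/-!
The inverse of `ι*` sends a point `p` of `X` to the prime of sections whose value at `p` lies in
the maximal ideal of `A_p`. That this inverts `ι*` comes down to the following: if `f ∈ D` is
`a/b` on a basic open `D(c)` around `p = ι*(q)`, then `ι(c) (f ι(b) - ι(a))` is nilpotent in
`O(X)`, hence lies in `q`. Nilpotence is checked stalkwise over a finite cover of `X` by basic
opens on which `f` is a quotient; `X` is quasi-compact since membership in the radical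
differential ideal generated by a set is already witnessed by a finite subset. On each piece it
reduces to: if `e` vanishes on `D(c)`, then `ι(c e)` is nilpotent. Indeed `c` lies in the
radical differential ideal generated by `Ann(e)`, and `{x | x e ∈ √(ker ι)}` is a radical
differential ideal, which is exactly where the Keigher property is needed.
-/

/-- An ideal is a differential ideal w.r.t. a family of derivation maps `d`. -/
def IsDiffIdeal {A : Type*} [CommRing A] {k : ℕ} (d : Fin k → A → A) (I : Ideal A) : Prop :=
  ∀ i : Fin k, ∀ x ∈ I, d i x ∈ I

/-- The differential spectrum: prime differential ideals, with the Kolchin topology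
(the subspace topology induced from the Zariski topology on `PrimeSpectrum`). -/
abbrev DiffSpec {A : Type*} [CommRing A] {k : ℕ} (d : Fin k → A → A) :=
  {p : PrimeSpectrum A // IsDiffIdeal d p.asIdeal}

/-- A Keigher ring: the radical of every differential ideal is differential. -/
def IsKeigher {A : Type*} [CommRing A] {k : ℕ} (d : Fin k → A → A) : Prop :=
  ∀ I : Ideal A, IsDiffIdeal d I → IsDiffIdeal d I.radical

/-- `radDiffGen d E` is the smallest radical differential ideal containing `E`. -/
def radDiffGen {A : Type*} [CommRing A] {k : ℕ} (d : Fin k → A → A) (E : Set A) : Ideal A :=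
  sInf {I : Ideal A | E ⊆ I ∧ I.IsRadical ∧ IsDiffIdeal d I}

/-- A function `X → ⊔_p A_p` is regular if it is locally a quotient `a/b` with `b`
outside every prime differential ideal of the neighborhood. -/
def RegularLoc {A : Type*} [CommRing A] {k : ℕ} {d : Fin k → A → A}
    (f : ∀ p : DiffSpec d, Localization.AtPrime p.1.asIdeal) : Prop :=
  ∀ p : DiffSpec d, ∃ U : Set (DiffSpec d), IsOpen U ∧ p ∈ U ∧ ∃ a b : A,
    (∀ q ∈ U, b ∉ q.1.asIdeal) ∧
    ∀ q ∈ U, f q * algebraMap A (Localization.AtPrime q.1.asIdeal) b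
      = algebraMap A (Localization.AtPrime q.1.asIdeal) a

theorem Ideal.IsRadical.colon_singleton {A : Type*} [CommRing A] {I : Ideal A} (hr : I.IsRadical)
    (a : A) : (I.colon {a}).IsRadical := by
  rintro x ⟨n, hn⟩
  rw [Submodule.mem_colon_singleton, smul_eq_mul] at hn ⊢
  refine hr ⟨n + 1, ?_⟩
  rw [show (x * a) ^ (n + 1) = x ^ n * a * (x * a ^ n) by ring]
  exact I.mul_mem_right _ hn

theorem Ideal.isRadical_sSup_of_directedOn {A : Type*} [CommRing A] {S : Set (Ideal A)}
    (hne : S.Nonempty) (hdir : DirectedOn (· ≤ ·) S) (hS : ∀ I ∈ S, I.IsRadical) :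
    (sSup S).IsRadical := by
  rintro x ⟨n, hn⟩
  obtain ⟨I, hI, hxI⟩ := (Submodule.mem_sSup_of_directed hne hdir).1 hn
  exact (Submodule.mem_sSup_of_directed hne hdir).2 ⟨I, hI, hS I hI ⟨n, hxI⟩⟩

section RadDiffGen

variable {A : Type*} [CommRing A] {k : ℕ} {d : Fin k → A → A}

theorem subset_radDiffGen (E : Set A) : E ⊆ radDiffGen d E := fun _ hx =>
  Submodule.mem_sInf.2 fun _ hI => hI.1 hx

theorem radDiffGen_le {E : Set A} {I : Ideal A} (hE : E ⊆ I) (hr : I.IsRadical)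
    (hd : IsDiffIdeal d I) : radDiffGen d E ≤ I :=
  sInf_le ⟨hE, hr, hd⟩

theorem radDiffGen_isRadical (E : Set A) : (radDiffGen d E).IsRadical := by
  rintro x ⟨n, hn⟩
  exact Submodule.mem_sInf.2 fun I hI => hI.2.1 ⟨n, Submodule.mem_sInf.1 hn I hI⟩

theorem radDiffGen_isDiffIdeal (E : Set A) : IsDiffIdeal d (radDiffGen d E) := fun i x hx =>
  Submodule.mem_sInf.2 fun I hI => hI.2.2 i x (Submodule.mem_sInf.1 hx I hI)

theorem radDiffGen_mono {E F : Set A} (h : E ⊆ F) : radDiffGen d E ≤ radDiffGen d F :=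
  radDiffGen_le (h.trans (subset_radDiffGen F)) (radDiffGen_isRadical F) (radDiffGen_isDiffIdeal F)

theorem isDiffIdeal_sSup_of_directedOn {S : Set (Ideal A)} (hne : S.Nonempty)
    (hdir : DirectedOn (· ≤ ·) S) (hS : ∀ I ∈ S, IsDiffIdeal d I) : IsDiffIdeal d (sSup S) := by
  intro i x hx
  obtain ⟨I, hI, hxI⟩ := (Submodule.mem_sSup_of_directed hne hdir).1 hx
  exact (Submodule.mem_sSup_of_directed hne hdir).2 ⟨I, hI, hS I hI i x hxI⟩

theorem exists_finset_subset_of_mem_radDiffGen {E : Set A} {x : A} (hx : x ∈ radDiffGen d E) :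
    ∃ F : Finset A, ↑F ⊆ E ∧ x ∈ radDiffGen d ↑F := by
  classical
  set S := (fun F : Finset A => radDiffGen d ↑F) '' {F | ↑F ⊆ E}
  have hne : S.Nonempty := ⟨_, ∅, by simp, rfl⟩
  have hdir : DirectedOn (· ≤ ·) S := by
    rintro _ ⟨F₁, hF₁, rfl⟩ _ ⟨F₂, hF₂, rfl⟩
    refine ⟨_, ⟨F₁ ∪ F₂, by simpa using ⟨hF₁, hF₂⟩, rfl⟩, ?_, ?_⟩ <;>
      exact radDiffGen_mono (by simp)
  have hES : E ⊆ ↑(sSup S) := fun y hy =>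
    (Submodule.mem_sSup_of_directed hne hdir).2
      ⟨_, ⟨{y}, by simpa using hy, rfl⟩, subset_radDiffGen _ (by simp)⟩
  have hxS := radDiffGen_le hES
    (Ideal.isRadical_sSup_of_directedOn hne hdir <| by
      rintro _ ⟨F, -, rfl⟩; exact radDiffGen_isRadical _)
    (isDiffIdeal_sSup_of_directedOn hne hdir <| by
      rintro _ ⟨F, -, rfl⟩; exact radDiffGen_isDiffIdeal _)
    hx
  obtain ⟨_, ⟨F, hF, rfl⟩, hxF⟩ := (Submodule.mem_sSup_of_directed hne hdir).1 hxS
  exact ⟨F, hF, hxF⟩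

variable (hL : ∀ i (a b : A), d i (a * b) = a * d i b + d i a * b)
include hL

theorem IsDiffIdeal.mul_deriv_mem {I : Ideal A} (hd : IsDiffIdeal d I) (hr : I.IsRadical)
    {a b : A} (h : a * b ∈ I) (i : Fin k) : a * d i b ∈ I := by
  have hsum : a * d i b + d i a * b ∈ I := hL i a b ▸ hd i _ h
  refine hr ⟨2, ?_⟩
  have hsq : (a * d i b) ^ 2 = a * d i b * (a * d i b + d i a * b) - a * b * (d i a * d i b) := by
    ring
  rw [hsq]
  exact I.sub_mem (I.mul_mem_left _ hsum) (I.mul_mem_right _ h)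

theorem IsDiffIdeal.colon_singleton {I : Ideal A} (hd : IsDiffIdeal d I) (hr : I.IsRadical)
    (a : A) : IsDiffIdeal d (I.colon {a}) := by
  intro i x hx
  rw [Submodule.mem_colon_singleton, smul_eq_mul, mul_comm] at hx ⊢
  exact hd.mul_deriv_mem hL hr hx i

theorem mul_mem_of_mem_radDiffGen {I : Ideal A} (hd : IsDiffIdeal d I) (hr : I.IsRadical)
    {T : Set A} {a b : A} (hT : ∀ t ∈ T, t * a ∈ I) (hb : b ∈ radDiffGen d T) : b * a ∈ I := by
  have hle : radDiffGen d T ≤ I.colon {a} :=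
    radDiffGen_le (fun t ht => by simpa using hT t ht) (hr.colon_singleton a)
      (hd.colon_singleton hL hr a)
  simpa using hle hb

theorem exists_diffSpec_of_notMem_radDiffGen {E : Set A} {a : A} (ha : a ∉ radDiffGen d E) :
    ∃ P : DiffSpec d, E ⊆ P.1.asIdeal ∧ a ∉ P.1.asIdeal := by
  set S := {I : Ideal A | radDiffGen d E ≤ I ∧ I.IsRadical ∧ IsDiffIdeal d I ∧ a ∉ I}
  have hchain : ∀ c ⊆ S, IsChain (· ≤ ·) c → ∀ I ∈ c, ∃ J ∈ S, ∀ I' ∈ c, I' ≤ J := by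
    intro c hcS hc I hI
    have hne : c.Nonempty := ⟨I, hI⟩
    refine ⟨sSup c, ⟨(hcS hI).1.trans (le_sSup hI),
      Ideal.isRadical_sSup_of_directedOn hne hc.directedOn fun J hJ => (hcS hJ).2.1,
      isDiffIdeal_sSup_of_directedOn hne hc.directedOn fun J hJ => (hcS hJ).2.2.1, ?_⟩,
      fun _ => le_sSup⟩
    intro haS
    obtain ⟨J, hJ, haJ⟩ := (Submodule.mem_sSup_of_directed hne hc.directedOn).1 haS
    exact (hcS hJ).2.2.2 haJ
  obtain ⟨M, -, hM⟩ := zorn_le_nonempty₀ S hchain _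
    ⟨le_rfl, radDiffGen_isRadical E, radDiffGen_isDiffIdeal E, ha⟩
  obtain ⟨hEM, hMr, hMd, haM⟩ := hM.prop
  have hadj : ∀ z ∉ M, a ∈ radDiffGen d (insert z M) := by
    intro z hz
    by_contra haz
    have hle : M ≤ radDiffGen d (insert z M) := fun w hw => subset_radDiffGen _ (Or.inr hw)
    exact hz (hM.2 ⟨hEM.trans hle, radDiffGen_isRadical _, radDiffGen_isDiffIdeal _, haz⟩ hle
      (subset_radDiffGen _ (Set.mem_insert z _)))
  have hprime : M.IsPrime := by
    refine ⟨fun htop => haM (htop ▸ Submodule.mem_top), fun {x y} hxy => ?_⟩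
    by_contra! h
    have hay : a * y ∈ M := mul_mem_of_mem_radDiffGen hL hMd hMr
      (by rintro t (rfl | ht); exacts [hxy, M.mul_mem_right _ ht]) (hadj x h.1)
    have haa : a * a ∈ M := mul_mem_of_mem_radDiffGen hL hMd hMr
      (by rintro t (rfl | ht); exacts [mul_comm a t ▸ hay, M.mul_mem_right _ ht]) (hadj y h.2)
    exact haM (hMr ⟨2, by rwa [sq]⟩)
  exact ⟨⟨⟨M, hprime⟩, hMd⟩, (subset_radDiffGen E).trans hEM, haM⟩

theorem mem_radDiffGen_iff {E : Set A} {a : A} :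
    a ∈ radDiffGen d E ↔ ∀ P : DiffSpec d, E ⊆ P.1.asIdeal → a ∈ P.1.asIdeal := by
  refine ⟨fun ha P hP => radDiffGen_le hP P.1.isPrime.isRadical P.2 ha, fun h => ?_⟩
  by_contra ha
  obtain ⟨P, hEP, haP⟩ := exists_diffSpec_of_notMem_radDiffGen hL ha
  exact haP (h P hEP)

end RadDiffGen

theorem Pi.isNilpotent_of_forall_associated {ι J : Type*} [Finite J] {R : ι → Type*}
    [∀ i, CommRing (R i)] {f : ∀ i, R i} {g : J → ∀ i, R i} (hg : ∀ j, IsNilpotent (g j))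
    (hfg : ∀ i, ∃ j, Associated (f i) (g j i)) : IsNilpotent f := by
  have := Fintype.ofFinite J
  choose n hn using hg
  refine ⟨∑ j, n j, funext fun i => ?_⟩
  obtain ⟨j, u, hu⟩ := hfg i
  have hgj : g j i ^ ∑ j, n j = 0 :=
    congrFun (pow_eq_zero_of_le (Finset.single_le_sum (by simp) (Finset.mem_univ j)) (hn j)) i
  rwa [← hu, mul_pow, ← Units.val_pow_eq_pow_val, Units.mul_left_eq_zero] at hgj

theorem Derivation.map_mem_maximalIdeal_of_lifts {A : Type*} [CommRing A] (P : Ideal A)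
    [P.IsPrime] {dA : A → A} (hP : ∀ x ∈ P, dA x ∈ P)
    (δ : Derivation ℤ (Localization.AtPrime P) (Localization.AtPrime P))
    (hδ : ∀ a, δ (algebraMap A _ a) = algebraMap A _ (dA a)) {z : Localization.AtPrime P}
    (hz : z ∈ IsLocalRing.maximalIdeal _) : δ z ∈ IsLocalRing.maximalIdeal _ := by
  set m := IsLocalRing.maximalIdeal (Localization.AtPrime P)
  obtain ⟨⟨a, s⟩, hzs⟩ := IsLocalization.surj P.primeCompl z
  have hmem : ∀ x : A, algebraMap A _ x ∈ m ↔ x ∈ P :=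
    IsLocalization.AtPrime.to_map_mem_maximal_iff _ P
  have ha : a ∈ P := (hmem a).1 (hzs ▸ m.mul_mem_right _ hz)
  have hs : IsUnit (algebraMap A (Localization.AtPrime P) s) := IsLocalization.map_units _ s
  have hlin : δ z * algebraMap A _ s = algebraMap A _ (dA a) - z * algebraMap A _ (dA s) := by
    have := congrArg δ hzs
    rw [Derivation.leibniz, hδ, hδ, smul_eq_mul, smul_eq_mul] at this
    linear_combination this
  rw [← Ideal.mul_unit_mem_iff_mem m hs, hlin]
  exact m.sub_mem ((hmem _).2 (hP a ha)) (m.mul_mem_right _ hz)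

section Sections

variable {A : Type*} [CommRing A] {k : ℕ} {d : Fin k → A → A}

local notation "𝒪[" p "]" => Localization.AtPrime (PrimeSpectrum.asIdeal (Subtype.val p))

variable (d) in
def toSections : A →+* ∀ p : DiffSpec d, 𝒪[p] := RingHom.pi fun p => algebraMap A 𝒪[p]

theorem isDiffIdeal_ker_toSections (δL : ∀ p : DiffSpec d, Fin k → Derivation ℤ 𝒪[p] 𝒪[p])
    (hδL : ∀ p i a, δL p i (algebraMap A 𝒪[p] a) = algebraMap A 𝒪[p] (d i a)) :
    IsDiffIdeal d (RingHom.ker (toSections d)) := by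
  intro i x hx
  rw [RingHom.mem_ker] at hx ⊢
  funext p
  have hxp : algebraMap A 𝒪[p] x = 0 := congrFun hx p
  simp only [toSections, RingHom.pi_apply, Pi.zero_apply]
  rw [← hδL, hxp, map_zero]

theorem isOpen_setOf_notMem (a : A) : IsOpen {p : DiffSpec d | a ∉ p.1.asIdeal} :=
  (PrimeSpectrum.basicOpen a).isOpen.preimage continuous_subtype_val

section Leibniz

variable (hL : ∀ i (a b : A), d i (a * b) = a * d i b + d i a * b)
include hL

theorem isNilpotent_toSections_mul_of_eq_zero (hK : IsKeigher d)
    (hker : IsDiffIdeal d (RingHom.ker (toSections d)))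
    {c e : A} (he : ∀ p : DiffSpec d, c ∉ p.1.asIdeal → algebraMap A 𝒪[p] e = 0) :
    IsNilpotent (toSections d (c * e)) := by
  have hc : c ∈ radDiffGen d {s | s * e = 0} := by
    refine (mem_radDiffGen_iff hL).2 fun P hP => ?_
    by_contra hcP
    obtain ⟨m, hm⟩ := (IsLocalization.map_eq_zero_iff P.1.asIdeal.primeCompl _ e).1 (he P hcP)
    exact m.2 (hP hm)
  obtain ⟨n, hn⟩ : c * e ∈ (RingHom.ker (toSections d)).radical :=
    mul_mem_of_mem_radDiffGen hL (hK _ hker) (Ideal.radical_isRadical _)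
      (fun s (hs : s * e = 0) => hs ▸ Ideal.zero_mem _) hc
  exact ⟨n, by rwa [← map_pow, ← RingHom.mem_ker]⟩

theorem DiffSpec.exists_finset_cover (c : DiffSpec d → A) (hc : ∀ p, c p ∉ p.1.asIdeal) :
    ∃ T : Finset (DiffSpec d), ∀ p : DiffSpec d, ∃ t ∈ T, c t ∉ p.1.asIdeal := by
  classical
  have h1 : (1 : A) ∈ radDiffGen d (Set.range c) :=
    (mem_radDiffGen_iff hL).2 fun P hP => absurd (hP ⟨P, rfl⟩) (hc P)
  obtain ⟨F, hF, h1F⟩ := exists_finset_subset_of_mem_radDiffGen h1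
  rw [← Set.image_univ, Finset.subset_set_image_iff] at hF
  obtain ⟨T, -, rfl⟩ := hF
  refine ⟨T, fun p => ?_⟩
  by_contra! h
  refine p.1.isPrime.ne_top ((Ideal.eq_top_iff_one _).2 ((mem_radDiffGen_iff hL).1 h1F p ?_))
  intro x hx
  obtain ⟨t, ht, rfl⟩ := Finset.mem_image.1 hx
  exact h t ht

end Leibniz

namespace RegularLoc

variable {f : ∀ p : DiffSpec d, 𝒪[p]} (hf : RegularLoc f)
include hf

theorem exists_basicOpen (p : DiffSpec d) :
    ∃ c a b : A, c ∉ p.1.asIdeal ∧ ∀ q : DiffSpec d, c ∉ q.1.asIdeal →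
      b ∉ q.1.asIdeal ∧ f q * algebraMap A 𝒪[q] b = algebraMap A 𝒪[q] a := by
  obtain ⟨U, hU, hpU, a, b, hb, hab⟩ := hf p
  obtain ⟨V, hV, rfl⟩ := isOpen_induced_iff.1 hU
  obtain ⟨_, ⟨c, rfl⟩, hpc, hcV⟩ :=
    PrimeSpectrum.isTopologicalBasis_basic_opens.isOpen_iff.1 hV p.1 hpU
  exact ⟨c, a, b, hpc, fun q hq => ⟨hb q (hcV hq), hab q (hcV hq)⟩⟩

theorem isOpen_setOf_isUnit : IsOpen {p | IsUnit (f p)} := by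
  refine isOpen_iff_forall_mem_open.2 fun p hp => ?_
  obtain ⟨U, hU, hpU, a, b, hb, hab⟩ := hf p
  have hunit : ∀ q : DiffSpec d, ∀ x : A, IsUnit (algebraMap A 𝒪[q] x) ↔ x ∉ q.1.asIdeal :=
    fun q => IsLocalization.AtPrime.isUnit_to_map_iff _ _
  refine ⟨U ∩ {q | a ∉ q.1.asIdeal}, fun q ⟨hqU, (hqa : a ∉ q.1.asIdeal)⟩ => ?_,
    hU.inter (isOpen_setOf_notMem a), hpU, ?_⟩
  · rw [← hunit, ← hab q hqU] at hqa
    exact isUnit_of_mul_isUnit_left hqa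
  · show a ∉ p.1.asIdeal
    rw [← hunit, ← hab p hpU]
    exact hp.mul ((hunit p b).2 (hb p hpU))

variable (hL : ∀ i (a b : A), d i (a * b) = a * d i b + d i a * b)
include hL

theorem isNilpotent_sub (hK : IsKeigher d) (hker : IsDiffIdeal d (RingHom.ker (toSections d)))
    {c a b : A} (hcab : ∀ q : DiffSpec d, c ∉ q.1.asIdeal →
      b ∉ q.1.asIdeal ∧ f q * algebraMap A 𝒪[q] b = algebraMap A 𝒪[q] a) :
    IsNilpotent (toSections d c * (f * toSections d b - toSections d a)) := by
  choose c' a' b' hc' hcab' using hf.exists_basicOpen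
  obtain ⟨T, hT⟩ := DiffSpec.exists_finset_cover hL c' hc'
  refine Pi.isNilpotent_of_forall_associated (J := T)
    (g := fun t => toSections d (c * c' t * (a' t * b - a * b' t))) (fun t => ?_) (fun q => ?_)
  · refine isNilpotent_toSections_mul_of_eq_zero hL hK hker fun q hq => ?_
    have hcq : c ∉ q.1.asIdeal := fun h => hq (Ideal.mul_mem_right _ _ h)
    have hc'q : c' t ∉ q.1.asIdeal := fun h => hq (Ideal.mul_mem_left _ _ h)
    rw [map_sub, map_mul, map_mul, ← (hcab q hcq).2, ← (hcab' t q hc'q).2]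
    ring
  · obtain ⟨t, ht, hq⟩ := hT q
    obtain ⟨hbq, hfq⟩ := hcab' t q hq
    have hu : IsUnit (algebraMap A 𝒪[q] (b' t * c' t)) :=
      (IsLocalization.AtPrime.isUnit_to_map_iff _ _ _).2 (q.1.isPrime.mul_notMem hbq hq)
    refine ⟨⟨t, ht⟩, hu.unit, ?_⟩
    simp only [IsUnit.unit_spec, toSections, RingHom.pi_apply, Pi.mul_apply, Pi.sub_apply,
      map_mul, map_sub]
    linear_combination (algebraMap A 𝒪[q] c * algebraMap A 𝒪[q] (c' t) *
      algebraMap A 𝒪[q] b) * hfq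

end RegularLoc

section SubringOfSections

variable (D : Subring (∀ p : DiffSpec d, 𝒪[p]))

def evalAt (p : DiffSpec d) : D →+* 𝒪[p] := (Pi.evalRingHom _ p).comp D.subtype

def vanishingPrime (p : DiffSpec d) : PrimeSpectrum D :=
  ⟨(IsLocalRing.maximalIdeal 𝒪[p]).comap (evalAt D p), Ideal.IsPrime.comap _⟩

theorem continuous_vanishingPrime (hreg : ∀ f ∈ D, RegularLoc f) :
    Continuous (vanishingPrime D) := by
  rw [PrimeSpectrum.isTopologicalBasis_basic_opens.continuous_iff]
  rintro _ ⟨g, rfl⟩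
  convert (hreg g g.2).isOpen_setOf_isUnit using 1
  ext p
  simp [vanishingPrime, evalAt]

theorem isDiffIdeal_vanishingPrime {dD : Fin k → D → D}
    (δL : ∀ p : DiffSpec d, Fin k → Derivation ℤ 𝒪[p] 𝒪[p])
    (hδL : ∀ p i a, δL p i (algebraMap A 𝒪[p] a) = algebraMap A 𝒪[p] (d i a))
    (hdD : ∀ i (x : D) p, (dD i x : ∀ p : DiffSpec d, 𝒪[p]) p = δL p i ((x : ∀ p, 𝒪[p]) p))
    (p : DiffSpec d) : IsDiffIdeal dD (vanishingPrime D p).asIdeal := by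
  intro i x hx
  simp only [vanishingPrime, evalAt, Ideal.mem_comap, RingHom.comp_apply, Subring.coe_subtype,
    Pi.evalRingHom_apply] at hx ⊢
  rw [hdD]
  exact Derivation.map_mem_maximalIdeal_of_lifts _ (p.2 i) (δL p i) (hδL p i) hx

variable {D} (hD : ∀ a, toSections d a ∈ D)

theorem comap_vanishingPrime (p : DiffSpec d) :
    PrimeSpectrum.comap ((toSections d).codRestrict D hD) (vanishingPrime D p) = p.1 := by
  ext1
  exact IsLocalization.AtPrime.under_maximalIdeal _ _

theorem isDiffIdeal_comap_codRestrict {dD : Fin k → D → D}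
    (δL : ∀ p : DiffSpec d, Fin k → Derivation ℤ 𝒪[p] 𝒪[p])
    (hδL : ∀ p i a, δL p i (algebraMap A 𝒪[p] a) = algebraMap A 𝒪[p] (d i a))
    (hdD : ∀ i (x : D) p, (dD i x : ∀ p : DiffSpec d, 𝒪[p]) p = δL p i ((x : ∀ p, 𝒪[p]) p))
    (Q : DiffSpec dD) : IsDiffIdeal d (Q.1.asIdeal.comap ((toSections d).codRestrict D hD)) := by
  intro i a ha
  have hcomm :
      dD i ((toSections d).codRestrict D hD a) = (toSections d).codRestrict D hD (d i a) :=
    Subtype.ext (funext fun p => (hdD i _ p).trans (hδL p i a))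
  rw [Ideal.mem_comap, ← hcomm]
  exact Q.2 i _ ha

theorem vanishingPrime_comap (hL : ∀ i (a b : A), d i (a * b) = a * d i b + d i a * b)
    (hK : IsKeigher d) (hker : IsDiffIdeal d (RingHom.ker (toSections d)))
    (hreg : ∀ f ∈ D, RegularLoc f) (Q : PrimeSpectrum D)
    (hQ : IsDiffIdeal d (Q.asIdeal.comap ((toSections d).codRestrict D hD))) :
    vanishingPrime D ⟨PrimeSpectrum.comap ((toSections d).codRestrict D hD) Q, hQ⟩ = Q := by
  set ι := (toSections d).codRestrict D hD
  set p : DiffSpec d := ⟨PrimeSpectrum.comap ι Q, hQ⟩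
  ext f
  obtain ⟨c, a, b, hc, hcab⟩ := (hreg f f.2).exists_basicOpen p
  obtain ⟨hb, hfab⟩ := hcab p hc
  have hnil : IsNilpotent (ι c * (f * ι b - ι a)) :=
    (IsNilpotent.map_iff (f := D.subtype) Subtype.val_injective).1
      ((hreg f f.2).isNilpotent_sub hL hK hker hcab)
  have hsub : f * ι b - ι a ∈ Q.asIdeal :=
    (Q.isPrime.mul_mem_left_iff hc).1 (nilpotent_iff_mem_prime.1 hnil _ Q.isPrime)
  have hunit : IsUnit (algebraMap A 𝒪[p] b) :=
    (IsLocalization.AtPrime.isUnit_to_map_iff _ _ b).2 hb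
  calc f.1 p ∈ IsLocalRing.maximalIdeal 𝒪[p]
      ↔ f.1 p * algebraMap A 𝒪[p] b ∈ IsLocalRing.maximalIdeal 𝒪[p] :=
        (Ideal.mul_unit_mem_iff_mem _ hunit).symm
    _ ↔ ι a ∈ Q.asIdeal := by
        rw [hfab]
        exact IsLocalization.AtPrime.to_map_mem_maximal_iff 𝒪[p] p.1.asIdeal a
    _ ↔ f * ι b ∈ Q.asIdeal :=
        ⟨fun ha => by simpa using Q.asIdeal.add_mem hsub ha,
          fun hf => by simpa using Q.asIdeal.sub_mem hf hsub⟩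
    _ ↔ f ∈ Q.asIdeal := Q.isPrime.mul_mem_right_iff hb

end SubringOfSections

end Sections

theorem stmt15_general {A : Type*} [CommRing A] {k : ℕ} (δ : Fin k → Derivation ℤ A A)
    (hK : IsKeigher (fun i => ⇑(δ i)))
    (δL : ∀ p : DiffSpec (fun i => ⇑(δ i)),
      Fin k → Derivation ℤ (Localization.AtPrime p.1.asIdeal) (Localization.AtPrime p.1.asIdeal))
    (hδL : ∀ (p : DiffSpec (fun i => ⇑(δ i))) (i : Fin k) (a : A),
      δL p i (algebraMap A (Localization.AtPrime p.1.asIdeal) a)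
        = algebraMap A (Localization.AtPrime p.1.asIdeal) (δ i a))
    (D : Subring (∀ p : DiffSpec (fun i => ⇑(δ i)), Localization.AtPrime p.1.asIdeal))
    (hreg : ∀ f ∈ D, RegularLoc f)
    (himg : ∀ a : A,
      (fun p : DiffSpec (fun i => ⇑(δ i)) => algebraMap A (Localization.AtPrime p.1.asIdeal) a) ∈ D)
    (dD : Fin k → D → D)
    (hdD : ∀ i (x : D) (p : DiffSpec (fun i => ⇑(δ i))),
      ((dD i x : D) : ∀ p, Localization.AtPrime p.1.asIdeal) p
        = δL p i (((x : D) : ∀ p, Localization.AtPrime p.1.asIdeal) p)) :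
    ∃ h : DiffSpec dD ≃ₜ DiffSpec (fun i => ⇑(δ i)),
      ∀ q, (h q).1.asIdeal = Ideal.comap
        (RingHom.codRestrict
          (Pi.ringHom fun p : DiffSpec (fun i => ⇑(δ i)) =>
            algebraMap A (Localization.AtPrime p.1.asIdeal)) D himg) q.1.asIdeal := by
  have hL : ∀ i (a b : A), δ i (a * b) = a * δ i b + δ i a * b := fun i a b => by
    rw [Derivation.leibniz, smul_eq_mul, smul_eq_mul]
    ring
  have hker := isDiffIdeal_ker_toSections δL hδL
  have hcomap := isDiffIdeal_comap_codRestrict himg δL hδL hdD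
  refine ⟨{ toFun := fun q => ⟨PrimeSpectrum.comap ((toSections _).codRestrict D himg) q.1,
              hcomap q⟩
            invFun := fun p => ⟨vanishingPrime D p, isDiffIdeal_vanishingPrime D δL hδL hdD p⟩
            left_inv := fun q => Subtype.ext (vanishingPrime_comap himg hL hK hker hreg q.1 _)
            right_inv := fun p => Subtype.ext (comap_vanishingPrime himg p)
            continuous_toFun :=
              ((PrimeSpectrum.continuous_comap _).comp continuous_subtype_val).subtype_mk _
            continuous_invFun := (continuous_vanishingPrime D hreg).subtype_mk _ }, fun q => rfl⟩

/-- For a Keigher ring `A` and any differential subring `D` of `O(X)` containing the image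
of the canonical map `ι : A → O(X)`, the contraction map `Spec^Δ D → Spec^Δ A` is a
homeomorphism. -/
theorem stmt15 {A : Type*} [CommRing A] {k : ℕ} (δ : Fin k → Derivation ℤ A A)
    (hcomm : ∀ i j a, δ i (δ j a) = δ j (δ i a))
    (hK : IsKeigher (fun i => ⇑(δ i)))
    (δL : ∀ p : DiffSpec (fun i => ⇑(δ i)),
      Fin k → Derivation ℤ (Localization.AtPrime p.1.asIdeal) (Localization.AtPrime p.1.asIdeal))
    (hδL : ∀ (p : DiffSpec (fun i => ⇑(δ i))) (i : Fin k) (a : A),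
      δL p i (algebraMap A (Localization.AtPrime p.1.asIdeal) a)
        = algebraMap A (Localization.AtPrime p.1.asIdeal) (δ i a))
    (D : Subring (∀ p : DiffSpec (fun i => ⇑(δ i)), Localization.AtPrime p.1.asIdeal))
    (hreg : ∀ f ∈ D, RegularLoc f)
    (himg : ∀ a : A,
      (fun p : DiffSpec (fun i => ⇑(δ i)) => algebraMap A (Localization.AtPrime p.1.asIdeal) a) ∈ D)
    (hclosed : ∀ f ∈ D, ∀ i, (fun p => δL p i (f p)) ∈ D)
    (dD : Fin k → D → D)
    (hdD : ∀ i (x : D) (p : DiffSpec (fun i => ⇑(δ i))),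
      ((dD i x : D) : ∀ p, Localization.AtPrime p.1.asIdeal) p
        = δL p i (((x : D) : ∀ p, Localization.AtPrime p.1.asIdeal) p)) :
    ∃ h : DiffSpec dD ≃ₜ DiffSpec (fun i => ⇑(δ i)),
      ∀ q, (h q).1.asIdeal = Ideal.comap
        (RingHom.codRestrict
          (Pi.ringHom fun p : DiffSpec (fun i => ⇑(δ i)) =>
            algebraMap A (Localization.AtPrime p.1.asIdeal)) D himg) q.1.asIdeal :=
  stmt15_general δ hK δL hδL D hreg himg dD hdD
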